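/- Riccati (Sturm) comparison: Let a < b be real numbers and let u, v : ℝ → ℝ be differentiable on (a,b] with u'(t) + u(t)² ≤ v'(t) + v(t)² for all t ∈ (a,b], where the functions t ↦ u'(t) + u(t)² and t ↦ v'(t) + v(t)² extend continuously to [a,b]. Suppose the limits L_u = lim_{t→a⁺} u(t) and L_v = lim_{t→a⁺} v(t) exist as extended real numbers in (−∞, +∞] and satisfy L_u ≤ L_v. Then u(t) ≤ v(t) for all t ∈ (a,b]. -/

import Mathlib

open Set Filter Real

lemma riccati_aux_hasDeriv {u v : ℝ → ℝ} {M t : ℝ}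
    (hu : DifferentiableAt ℝ u t) (hv : DifferentiableAt ℝ v t) :
    HasDerivAt (fun s => (u s - v s) * Real.exp (-(M * s)))
      ((deriv u t - deriv v t) * Real.exp (-(M * t))
        + (u t - v t) * (Real.exp (-(M * t)) * (-M))) t := by
  have h1 : HasDerivAt (fun s : ℝ => -(M * s)) (-M) t := by
    exact (((hasDerivAt_id t).const_mul M).neg).congr_deriv (by ring)
  have h2 : HasDerivAt (fun s : ℝ => Real.exp (-(M * s))) (Real.exp (-(M * t)) * (-M)) t :=
    (Real.hasDerivAt_exp _).comp t h1
  exact (hu.hasDerivAt.sub hv.hasDerivAt).mul h2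

lemma riccati_aux_anti {u v : ℝ → ℝ} {s : Set ℝ} {M : ℝ} (hconv : Convex ℝ s)
    (hu : ∀ t ∈ s, DifferentiableAt ℝ u t) (hv : ∀ t ∈ s, DifferentiableAt ℝ v t)
    (hw : ∀ t ∈ interior s, 0 ≤ u t - v t)
    (hM : ∀ t ∈ interior s, -(u t + v t) ≤ M)
    (hineq : ∀ t ∈ interior s, deriv u t + u t ^ 2 ≤ deriv v t + v t ^ 2) :
    AntitoneOn (fun t => (u t - v t) * Real.exp (-(M * t))) s := by
  apply antitoneOn_of_deriv_nonpos hconv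
  · intro t ht
    exact (riccati_aux_hasDeriv (hu t ht) (hv t ht)).differentiableAt.continuousAt.continuousWithinAt
  · intro t ht
    exact (riccati_aux_hasDeriv (hu t (interior_subset ht))
      (hv t (interior_subset ht))).differentiableAt.differentiableWithinAt
  · intro t ht
    have ht' := interior_subset ht
    rw [(riccati_aux_hasDeriv (hu t ht') (hv t ht')).deriv]
    have key : deriv u t - deriv v t ≤ M * (u t - v t) := by
      nlinarith [hineq t ht, mul_le_mul_of_nonneg_right (hM t ht) (hw t ht)]
    nlinarith [mul_le_mul_of_nonneg_right key (Real.exp_pos (-(M * t))).le]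

lemma riccati_aux_hasDeriv2 {u v : ℝ → ℝ} {a t : ℝ}
    (hu : DifferentiableAt ℝ u t) (hv : DifferentiableAt ℝ v t) :
    HasDerivAt (fun s => (u s - v s) ^ 2 * (s - a) ^ 3)
      (2 * (u t - v t) * (deriv u t - deriv v t) * (t - a) ^ 3
        + (u t - v t) ^ 2 * (3 * (t - a) ^ 2)) t := by
  have h1 : HasDerivAt (fun s : ℝ => s - a) 1 t := (hasDerivAt_id t).sub_const a
  have := ((hu.hasDerivAt.sub hv.hasDerivAt).pow 2).mul (h1.pow 3)
  exact this.congr_deriv (by norm_num [Pi.pow_apply])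

lemma riccati_aux_anti2 {u v : ℝ → ℝ} {a t₁ : ℝ}
    (hu : ∀ t ∈ Set.Ioc a t₁, DifferentiableAt ℝ u t)
    (hv : ∀ t ∈ Set.Ioc a t₁, DifferentiableAt ℝ v t)
    (hw : ∀ t ∈ Set.Ioo a t₁, 0 ≤ u t - v t)
    (hsum : ∀ t ∈ Set.Ioo a t₁, 3 / 2 ≤ (u t + v t) * (t - a))
    (hineq : ∀ t ∈ Set.Ioo a t₁, deriv u t + u t ^ 2 ≤ deriv v t + v t ^ 2) :
    AntitoneOn (fun t => (u t - v t) ^ 2 * (t - a) ^ 3) (Set.Ioc a t₁) := by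
  apply antitoneOn_of_deriv_nonpos (convex_Ioc a t₁)
  · intro t ht
    exact (riccati_aux_hasDeriv2 (hu t ht) (hv t ht)).differentiableAt.continuousAt.continuousWithinAt
  · rw [interior_Ioc]
    intro t ht
    exact (riccati_aux_hasDeriv2 (hu t (Set.Ioo_subset_Ioc_self ht))
      (hv t (Set.Ioo_subset_Ioc_self ht))).differentiableAt.differentiableWithinAt
  · rw [interior_Ioc]
    intro t ht
    have ht' := Set.Ioo_subset_Ioc_self ht
    rw [(riccati_aux_hasDeriv2 (hu t ht') (hv t ht')).deriv]
    have hτ : 0 < t - a := sub_pos.mpr ht.1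
    have hw' := hw t ht
    have hd' : deriv u t - deriv v t ≤ -(u t + v t) * (u t - v t) := by
      nlinarith [hineq t ht]
    have key : 0 ≤ 2 * (u t - v t) * (t - a) ^ 3 := by positivity
    have h2 : 0 ≤ (u t - v t) ^ 2 * (t - a) ^ 2 := by positivity
    nlinarith [mul_le_mul_of_nonneg_left hd' key, mul_le_mul_of_nonneg_right (hsum t ht) h2]

lemma riccati_aux_inv_lower {f : ℝ → ℝ} {a t₁ C : ℝ} (hC : 0 ≤ C)
    (hf : ∀ t ∈ Set.Ioc a t₁, DifferentiableAt ℝ f t)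
    (hd : ∀ t ∈ Set.Ioc a t₁, -C ≤ deriv f t + f t ^ 2)
    (hbig : ∀ t ∈ Set.Ioc a t₁, 3 * C ≤ f t ^ 2 ∧ 0 < f t)
    (hlim : Filter.Tendsto (fun t => (f t)⁻¹) (nhdsWithin a (Set.Ioi a)) (nhds 0)) :
    ∀ t ∈ Set.Ioc a t₁, (f t)⁻¹ ≤ 4 / 3 * (t - a) := by
  have hder : ∀ t ∈ Set.Ioc a t₁, HasDerivAt (fun t => (f t)⁻¹ - 4 / 3 * t)
      (-(deriv f t) / f t ^ 2 - 4 / 3 * 1) t := fun t ht =>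
    ((hf t ht).hasDerivAt.inv (hbig t ht).2.ne').sub ((hasDerivAt_id t).const_mul (4 / 3 : ℝ))
  have hanti : AntitoneOn (fun t => (f t)⁻¹ - 4 / 3 * t) (Set.Ioc a t₁) := by
    apply antitoneOn_of_deriv_nonpos (convex_Ioc a t₁)
    · intro t ht
      exact (hder t ht).differentiableAt.continuousAt.continuousWithinAt
    · rw [interior_Ioc]
      intro t ht
      exact (hder t (Set.Ioo_subset_Ioc_self ht)).differentiableAt.differentiableWithinAt
    · rw [interior_Ioc]
      intro t ht
      have ht' := Set.Ioo_subset_Ioc_self ht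
      rw [(hder t ht').deriv]
      have h1 := (hbig t ht').1
      have h2 := (hbig t ht').2
      have h3 := hd t ht'
      have hfpos : (0:ℝ) < f t ^ 2 := by positivity
      have h4 : -(deriv f t) / f t ^ 2 ≤ 4 / 3 := by
        rw [div_le_iff₀ hfpos]; nlinarith
      linarith
  intro t ht
  have hψ : Filter.Tendsto (fun s => (f s)⁻¹ - 4 / 3 * s) (nhdsWithin a (Set.Ioi a))
      (nhds (0 - 4 / 3 * a)) :=
    hlim.sub (((continuous_const.mul continuous_id).tendsto a).mono_left nhdsWithin_le_nhds)
  have hle : (f t)⁻¹ - 4 / 3 * t ≤ 0 - 4 / 3 * a := by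
    apply ge_of_tendsto hψ
    filter_upwards [Ioo_mem_nhdsGT_of_mem (Set.left_mem_Ico.mpr ht.1)] with x hx
    exact hanti ⟨hx.1, hx.2.le.trans ht.2⟩ ht hx.2.le
  linarith

lemma riccati_aux_inv_upper {f : ℝ → ℝ} {a t₁ C : ℝ}
    (hf : ∀ t ∈ Set.Ioc a t₁, DifferentiableAt ℝ f t)
    (hd : ∀ t ∈ Set.Ioc a t₁, deriv f t + f t ^ 2 ≤ C)
    (hbig : ∀ t ∈ Set.Ioc a t₁, 2 * C ≤ f t ^ 2 ∧ 0 < f t)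
    (hlim : Filter.Tendsto (fun t => (f t)⁻¹) (nhdsWithin a (Set.Ioi a)) (nhds 0)) :
    ∀ t ∈ Set.Ioc a t₁, 1 / 2 * (t - a) ≤ (f t)⁻¹ := by
  have hder : ∀ t ∈ Set.Ioc a t₁, HasDerivAt (fun t => (f t)⁻¹ - 1 / 2 * t)
      (-(deriv f t) / f t ^ 2 - 1 / 2 * 1) t := fun t ht =>
    ((hf t ht).hasDerivAt.inv (hbig t ht).2.ne').sub ((hasDerivAt_id t).const_mul (1 / 2 : ℝ))
  have hmono : MonotoneOn (fun t => (f t)⁻¹ - 1 / 2 * t) (Set.Ioc a t₁) := by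
    apply monotoneOn_of_deriv_nonneg (convex_Ioc a t₁)
    · intro t ht
      exact (hder t ht).differentiableAt.continuousAt.continuousWithinAt
    · rw [interior_Ioc]
      intro t ht
      exact (hder t (Set.Ioo_subset_Ioc_self ht)).differentiableAt.differentiableWithinAt
    · rw [interior_Ioc]
      intro t ht
      have ht' := Set.Ioo_subset_Ioc_self ht
      rw [(hder t ht').deriv]
      have h1 := (hbig t ht').1
      have h2 := (hbig t ht').2
      have h3 := hd t ht'
      have hfpos : (0:ℝ) < f t ^ 2 := by positivity
      have h4 : 1 / 2 ≤ -(deriv f t) / f t ^ 2 := by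
        rw [le_div_iff₀ hfpos]; nlinarith
      linarith
  intro t ht
  have hψ : Filter.Tendsto (fun s => (f s)⁻¹ - 1 / 2 * s) (nhdsWithin a (Set.Ioi a))
      (nhds (0 - 1 / 2 * a)) :=
    hlim.sub (((continuous_const.mul continuous_id).tendsto a).mono_left nhdsWithin_le_nhds)
  have hle : 0 - 1 / 2 * a ≤ (f t)⁻¹ - 1 / 2 * t := by
    apply le_of_tendsto hψ
    filter_upwards [Ioo_mem_nhdsGT_of_mem (Set.left_mem_Ico.mpr ht.1)] with x hx
    exact hmono ⟨hx.1, hx.2.le.trans ht.2⟩ ht hx.2.le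
  linarith


set_option maxHeartbeats 1600000 in
/-- **Riccati (Sturm) comparison.**
Let `u, v` be differentiable on `(a, b]` with `u' + u² ≤ v' + v²` there, where
`u' + u²` and `v' + v²` extend continuously to `[a, b]`. If the limits
`L_u = lim_{t→a⁺} u(t)` and `L_v = lim_{t→a⁺} v(t)` exist as extended real numbers in
`(−∞, +∞]` and satisfy `L_u ≤ L_v`, then `u ≤ v` on `(a, b]`. -/
theorem riccati_comparison (a b : ℝ) (hab : a < b) (u v : ℝ → ℝ)
    (hu : ∀ t ∈ Set.Ioc a b, DifferentiableAt ℝ u t)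
    (hv : ∀ t ∈ Set.Ioc a b, DifferentiableAt ℝ v t)
    (huv : ∀ t ∈ Set.Ioc a b, deriv u t + u t ^ 2 ≤ deriv v t + v t ^ 2)
    (hUext : ∃ U : ℝ → ℝ, ContinuousOn U (Set.Icc a b) ∧
      ∀ t ∈ Set.Ioc a b, U t = deriv u t + u t ^ 2)
    (hVext : ∃ V : ℝ → ℝ, ContinuousOn V (Set.Icc a b) ∧
      ∀ t ∈ Set.Ioc a b, V t = deriv v t + v t ^ 2)
    (Lu Lv : EReal) (hLu' : Lu ≠ ⊥) (hLv' : Lv ≠ ⊥)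
    (hLu : Filter.Tendsto (fun t => (u t : EReal)) (nhdsWithin a (Set.Ioi a)) (nhds Lu))
    (hLv : Filter.Tendsto (fun t => (v t : EReal)) (nhdsWithin a (Set.Ioi a)) (nhds Lv))
    (hL : Lu ≤ Lv) :
    ∀ t ∈ Set.Ioc a b, u t ≤ v t := by
  by_contra hcon
  push_neg at hcon
  obtain ⟨t₀, ht₀, hw0⟩ := hcon
  have ha_t₀ : a < t₀ := ht₀.1
  have ht₀b : t₀ ≤ b := ht₀.2
  by_cases hA : ∃ s ∈ Set.Ioc a t₀, u s ≤ v s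
  · -- Case A : u ≤ v somewhere before t₀
    obtain ⟨s₀, hs₀, hs₀'⟩ := hA
    set S : Set ℝ := {t | t ∈ Set.Ioc a t₀ ∧ u t ≤ v t} with hSdef
    have hSne : S.Nonempty := ⟨s₀, hs₀, hs₀'⟩
    have hSbdd : BddAbove S := ⟨t₀, fun x hx => hx.1.2⟩
    set c := sSup S with hc
    have hcS : a < c := lt_of_lt_of_le hs₀.1 (le_csSup hSbdd ⟨hs₀, hs₀'⟩)
    have hct₀ : c ≤ t₀ := csSup_le hSne fun x hx => hx.1.2
    have hcIoc : c ∈ Set.Ioc a b := ⟨hcS, hct₀.trans ht₀b⟩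
    have hwc : u c ≤ v c := by
      by_contra hwc
      push_neg at hwc
      have hcont : ContinuousAt (fun t => u t - v t) c :=
        ((hu c hcIoc).sub (hv c hcIoc)).continuousAt
      have hpos : (0:ℝ) < u c - v c := sub_pos.mpr hwc
      obtain ⟨δ, hδ, hball⟩ := Metric.eventually_nhds_iff.mp
        (hcont.eventually (eventually_gt_nhds hpos))
      obtain ⟨x, hxS, hx⟩ := exists_lt_of_lt_csSup hSne (show c - δ < c by linarith)
      have hxc : x ≤ c := le_csSup hSbdd hxS
      have h1 : 0 < u x - v x := by
        apply hball
        rw [Real.dist_eq, abs_lt]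
        constructor <;> linarith
      have h2 := hxS.2
      linarith
    have hct₀' : c < t₀ := lt_of_le_of_ne hct₀ (fun h => by rw [h] at hwc; linarith)
    have hsub : Set.Icc c t₀ ⊆ Set.Ioc a b := fun x hx =>
      ⟨lt_of_lt_of_le hcS hx.1, hx.2.trans ht₀b⟩
    have hcontuv : ContinuousOn (fun t => u t + v t) (Set.Icc c t₀) := fun t ht =>
      ((hu t (hsub ht)).add (hv t (hsub ht))).continuousAt.continuousWithinAt
    obtain ⟨M, hM⟩ := isCompact_Icc.exists_bound_of_continuousOn hcontuv
    have hwpos : ∀ t ∈ Set.Ioo c t₀, 0 ≤ u t - v t := by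
      intro t ht
      by_contra h
      push_neg at h
      have htS : t ∈ S := ⟨⟨hcS.trans ht.1, ht.2.le⟩, by linarith⟩
      exact absurd (le_csSup hSbdd htS) (not_le.mpr ht.1)
    have hanti := riccati_aux_anti (convex_Icc c t₀) (fun t ht => hu t (hsub ht))
      (fun t ht => hv t (hsub ht))
      (by rw [interior_Icc]; exact hwpos)
      (by rw [interior_Icc]; intro t ht
          have := hM t (Set.Ioo_subset_Icc_self ht)
          rw [Real.norm_eq_abs] at this
          linarith [abs_le.mp this |>.1])
      (by rw [interior_Icc]; intro t ht
          exact huv t (hsub (Set.Ioo_subset_Icc_self ht)))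
    have h1 := hanti (Set.left_mem_Icc.mpr hct₀) (Set.right_mem_Icc.mpr hct₀) hct₀
    have h2 : 0 < (u t₀ - v t₀) * Real.exp (-(M * t₀)) :=
      mul_pos (sub_pos.mpr hw0) (Real.exp_pos _)
    have h1' : (u t₀ - v t₀) * Real.exp (-(M * t₀)) ≤ (u c - v c) * Real.exp (-(M * c)) := h1
    nlinarith [mul_nonneg (show (0:ℝ) ≤ v c - u c by linarith) (Real.exp_pos (-(M * c))).le]
  · -- Case B : v < u on all of (a, t₀]
    push_neg at hA
    have hB : ∀ s ∈ Set.Ioc a t₀, v s < u s := hA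
    have hLvu : Lv ≤ Lu := by
      apply le_of_tendsto_of_tendsto hLv hLu
      filter_upwards [Ioo_mem_nhdsGT_of_mem (Set.left_mem_Ico.mpr ha_t₀)] with s hs
      exact_mod_cast (hB s ⟨hs.1, hs.2.le⟩).le
    have hLeq : Lu = Lv := le_antisymm hL hLvu
    by_cases hTop : Lu = ⊤
    · -- Case B2 : both limits are +∞
      rw [hTop] at hLu
      have hLvTop : Filter.Tendsto (fun t => (v t : EReal)) (nhdsWithin a (Set.Ioi a)) (nhds ⊤) := by
        rw [← hTop, hLeq]; exact hLv
      have hut : Filter.Tendsto u (nhdsWithin a (Set.Ioi a)) Filter.atTop := by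
        rw [Filter.tendsto_atTop]
        intro K
        filter_upwards [(EReal.tendsto_nhds_top_iff_real.mp hLu) K] with t ht
        exact_mod_cast ht.le
      have hvt : Filter.Tendsto v (nhdsWithin a (Set.Ioi a)) Filter.atTop := by
        rw [Filter.tendsto_atTop]
        intro K
        filter_upwards [(EReal.tendsto_nhds_top_iff_real.mp hLvTop) K] with t ht
        exact_mod_cast ht.le
      obtain ⟨U, hUcont, hUeq⟩ := hUext
      obtain ⟨V, hVcont, hVeq⟩ := hVext
      obtain ⟨Cu, hCu⟩ := isCompact_Icc.exists_bound_of_continuousOn hUcont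
      obtain ⟨Cv, hCv⟩ := isCompact_Icc.exists_bound_of_continuousOn hVcont
      set C := max (max Cu Cv) 0 with hCdef
      have hC0 : 0 ≤ C := le_max_right _ _
      have hUb : ∀ t ∈ Set.Ioc a b, -C ≤ deriv u t + u t ^ 2 ∧ deriv u t + u t ^ 2 ≤ C := by
        intro t ht
        have h1 := abs_le.mp ((hCu t (Set.Ioc_subset_Icc_self ht)).trans
          ((le_max_left Cu Cv).trans (le_max_left _ 0)))
        rw [hUeq t ht] at h1
        exact h1
      have hVb : ∀ t ∈ Set.Ioc a b, -C ≤ deriv v t + v t ^ 2 ∧ deriv v t + v t ^ 2 ≤ C := by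
        intro t ht
        have h1 := abs_le.mp ((hCv t (Set.Ioc_subset_Icc_self ht)).trans
          ((le_max_right Cu Cv).trans (le_max_left _ 0)))
        rw [hVeq t ht] at h1
        exact h1
      set K := 1 + Real.sqrt (3 * C) with hKdef
      have hKpos : 0 < K := by positivity
      have hK2 : 3 * C ≤ K ^ 2 := by
        nlinarith [Real.sq_sqrt (by linarith : (0:ℝ) ≤ 3 * C), Real.sqrt_nonneg (3 * C)]
      have hev : ∀ᶠ t in nhdsWithin a (Set.Ioi a), K ≤ u t ∧ K ≤ v t :=
        (hut.eventually_ge_atTop K).and (hvt.eventually_ge_atTop K)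
      obtain ⟨t', ht', hsub'⟩ := mem_nhdsGT_iff_exists_Ioc_subset.mp hev
      set t₁ := min t' t₀ with ht₁def
      have hat₁ : a < t₁ := lt_min ht' ha_t₀
      have hsubIoc : Set.Ioc a t₁ ⊆ Set.Ioc a b := fun x hx =>
        ⟨hx.1, hx.2.trans ((min_le_right _ _).trans ht₀b)⟩
      have hsubK : ∀ t ∈ Set.Ioc a t₁, K ≤ u t ∧ K ≤ v t := fun t ht =>
        hsub' ⟨ht.1, ht.2.trans (min_le_left _ _)⟩
      have huinv : Filter.Tendsto (fun t => (u t)⁻¹) (nhdsWithin a (Set.Ioi a)) (nhds 0) :=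
        hut.inv_tendsto_atTop
      have hvinv : Filter.Tendsto (fun t => (v t)⁻¹) (nhdsWithin a (Set.Ioi a)) (nhds 0) :=
        hvt.inv_tendsto_atTop
      have hbig_u : ∀ t ∈ Set.Ioc a t₁, 3 * C ≤ u t ^ 2 ∧ 0 < u t := fun t ht =>
        ⟨hK2.trans (pow_le_pow_left₀ hKpos.le (hsubK t ht).1 2),
          hKpos.trans_le (hsubK t ht).1⟩
      have hbig_v : ∀ t ∈ Set.Ioc a t₁, 3 * C ≤ v t ^ 2 ∧ 0 < v t := fun t ht =>
        ⟨hK2.trans (pow_le_pow_left₀ hKpos.le (hsubK t ht).2 2),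
          hKpos.trans_le (hsubK t ht).2⟩
      have hulow := riccati_aux_inv_lower hC0 (fun t ht => hu t (hsubIoc ht))
        (fun t ht => (hUb t (hsubIoc ht)).1) hbig_u huinv
      have hvlow := riccati_aux_inv_lower hC0 (fun t ht => hv t (hsubIoc ht))
        (fun t ht => (hVb t (hsubIoc ht)).1) hbig_v hvinv
      have huup := riccati_aux_inv_upper (fun t ht => hu t (hsubIoc ht))
        (fun t ht => (hUb t (hsubIoc ht)).2)
        (fun t ht => ⟨by linarith [(hbig_u t ht).1], (hbig_u t ht).2⟩) huinv
      have hsum : ∀ t ∈ Set.Ioo a t₁, 3 / 2 ≤ (u t + v t) * (t - a) := by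
        intro t ht
        have htm : t ∈ Set.Ioc a t₁ := Set.Ioo_subset_Ioc_self ht
        have h1 := hulow t htm
        have h2 := hvlow t htm
        have hupos := (hbig_u t htm).2
        have hvpos := (hbig_v t htm).2
        have hta : 0 < t - a := sub_pos.mpr ht.1
        have h3 : 1 ≤ u t * (4 / 3 * (t - a)) := by
          calc 1 = u t * (u t)⁻¹ := (mul_inv_cancel₀ hupos.ne').symm
          _ ≤ u t * (4 / 3 * (t - a)) := mul_le_mul_of_nonneg_left h1 hupos.le
        have h4 : 1 ≤ v t * (4 / 3 * (t - a)) := by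
          calc 1 = v t * (v t)⁻¹ := (mul_inv_cancel₀ hvpos.ne').symm
          _ ≤ v t * (4 / 3 * (t - a)) := mul_le_mul_of_nonneg_left h2 hvpos.le
        nlinarith
      have hanti2 := riccati_aux_anti2 (fun t ht => hu t (hsubIoc ht))
        (fun t ht => hv t (hsubIoc ht))
        (fun t ht => (sub_pos.mpr (hB t ⟨ht.1, ht.2.le.trans (min_le_right _ _)⟩)).le)
        hsum
        (fun t ht => huv t (hsubIoc (Set.Ioo_subset_Ioc_self ht)))
      have ht₁mem : t₁ ∈ Set.Ioc a t₁ := ⟨hat₁, le_refl _⟩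
      have hwt₁ : 0 < u t₁ - v t₁ := sub_pos.mpr (hB t₁ ⟨hat₁, min_le_right _ _⟩)
      obtain ⟨c0, hc0pos, hc0le⟩ : ∃ c0 : ℝ, 0 < c0 ∧
          ∀ x ∈ Set.Ioc a t₁, c0 ≤ (u x - v x) ^ 2 * (x - a) ^ 3 := by
        refine ⟨(u t₁ - v t₁) ^ 2 * (t₁ - a) ^ 3,
          mul_pos (pow_pos hwt₁ 2) (pow_pos (sub_pos.mpr hat₁) 3), fun x hx => hanti2 hx ht₁mem hx.2⟩
      obtain ⟨s, hsmem, hs8⟩ : ∃ s ∈ Set.Ioc a t₁, s - a ≤ c0 / 8 := by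
        have hmin : 0 < min (c0 / 8) (t₁ - a) := lt_min (by linarith) (by linarith)
        refine ⟨a + min (c0 / 8) (t₁ - a), ⟨by linarith, ?_⟩, ?_⟩
        · linarith [min_le_right (c0 / 8) (t₁ - a)]
        · linarith [min_le_left (c0 / 8) (t₁ - a)]
      have h1 : c0 ≤ (u s - v s) ^ 2 * (s - a) ^ 3 := hc0le s hsmem
      have hsa : 0 < s - a := sub_pos.mpr hsmem.1
      have hvpos : 0 < v s := (hbig_v s hsmem).2
      have hupos : 0 < u s := (hbig_u s hsmem).2
      have hups : u s * (s - a) ≤ 2 := by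
        have h2 := huup s hsmem
        have hA1 : u s * (1 / 2 * (s - a)) ≤ u s * (u s)⁻¹ :=
          mul_le_mul_of_nonneg_left h2 hupos.le
        have hA2 : u s * (u s)⁻¹ = 1 := mul_inv_cancel₀ hupos.ne'
        nlinarith [hA1, hA2]
      have hw_le : u s - v s ≤ u s := by linarith
      have hw_pos : 0 < u s - v s := sub_pos.mpr (hB s ⟨hsmem.1, hsmem.2.trans (min_le_right _ _)⟩)
      have h6 : (u s - v s) * (s - a) ≤ 2 :=
        le_trans (mul_le_mul_of_nonneg_right hw_le hsa.le) hups
      have h7 : 0 ≤ (u s - v s) * (s - a) := (mul_pos hw_pos hsa).le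
      have h8 : (u s - v s) ^ 2 * (s - a) ^ 2 ≤ 4 := by
        nlinarith [mul_le_mul h6 h6 h7 (by norm_num : (0:ℝ) ≤ 2)]
      have h5 : (u s - v s) ^ 2 * (s - a) ^ 3 ≤ 4 * (s - a) := by
        nlinarith [mul_le_mul_of_nonneg_right h8 hsa.le]
      linarith
    · -- Case B1 : both limits equal a real number l
      set l := Lu.toReal with hl
      have hLureal : Lu = (l : EReal) := (EReal.coe_toReal hTop hLu').symm
      have hul : Filter.Tendsto u (nhdsWithin a (Set.Ioi a)) (nhds l) := by
        rw [← EReal.tendsto_coe]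
        rw [← hLureal]; exact hLu
      have hvl : Filter.Tendsto v (nhdsWithin a (Set.Ioi a)) (nhds l) := by
        rw [← EReal.tendsto_coe]
        rw [← hLureal, hLeq]; exact hLv
      have hwl : Filter.Tendsto (fun t => u t - v t) (nhdsWithin a (Set.Ioi a)) (nhds 0) := by
        simpa using hul.sub hvl
      set M := |2 * l| + 1 with hMdef
      have hMpos : 0 < M := by positivity
      have hMev : ∀ᶠ t in nhdsWithin a (Set.Ioi a), -(u t + v t) ≤ M := by
        have hlt : -(|2 * l| + 1) < l + l := by cases abs_cases (2 * l) <;> linarith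
        filter_upwards [(hul.add hvl).eventually (eventually_gt_nhds hlt)] with t ht
        rw [hMdef]; linarith
      obtain ⟨t', ht', hsub'⟩ := mem_nhdsGT_iff_exists_Ioc_subset.mp hMev
      set t₁ := min t' t₀ with ht₁def
      have hat₁ : a < t₁ := lt_min ht' ha_t₀
      have hsubIoc : Set.Ioc a t₁ ⊆ Set.Ioc a b := fun x hx =>
        ⟨hx.1, hx.2.trans ((min_le_right _ _).trans ht₀b)⟩
      have hanti := riccati_aux_anti (convex_Ioc a t₁) (fun t ht => hu t (hsubIoc ht))
        (fun t ht => hv t (hsubIoc ht))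
        (by rw [interior_Ioc]; intro t ht
            exact (sub_pos.mpr (hB t ⟨ht.1, ht.2.le.trans (min_le_right _ _)⟩)).le)
        (by rw [interior_Ioc]; intro t ht
            exact hsub' ⟨ht.1, ht.2.le.trans (min_le_left _ _)⟩)
        (by rw [interior_Ioc]; intro t ht
            exact huv t (hsubIoc (Set.Ioo_subset_Ioc_self ht)))
      have ht₁mem : t₁ ∈ Set.Ioc a t₁ := ⟨hat₁, le_refl _⟩
      have hwt₁ : 0 < u t₁ - v t₁ := sub_pos.mpr (hB t₁ ⟨hat₁, min_le_right _ _⟩)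
      have hε : ∀ᶠ s in nhdsWithin a (Set.Ioi a),
          (u t₁ - v t₁) * Real.exp (-(M * t₁)) * Real.exp (M * a) ≤ u s - v s := by
        filter_upwards [Ioo_mem_nhdsGT_of_mem (Set.left_mem_Ico.mpr hat₁)] with s hs
        have h1 : (u t₁ - v t₁) * Real.exp (-(M * t₁)) ≤ (u s - v s) * Real.exp (-(M * s)) :=
          hanti ⟨hs.1, hs.2.le⟩ ht₁mem hs.2.le
        have h2 : Real.exp (M * a) ≤ Real.exp (M * s) :=
          Real.exp_le_exp.mpr (by nlinarith [hs.1])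
        have hc₀ : 0 < (u t₁ - v t₁) * Real.exp (-(M * t₁)) := mul_pos hwt₁ (Real.exp_pos _)
        have h4 := mul_le_mul_of_nonneg_right h1 (Real.exp_pos (M * s)).le
        have h5 : (u s - v s) * Real.exp (-(M * s)) * Real.exp (M * s) = u s - v s := by
          rw [mul_assoc, ← Real.exp_add]; simp
        rw [h5] at h4
        have h6 := mul_le_mul_of_nonneg_left h2 hc₀.le
        linarith
      have hεpos : 0 < (u t₁ - v t₁) * Real.exp (-(M * t₁)) * Real.exp (M * a) := by positivity
      have hfin := ge_of_tendsto hwl hε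
      linarith
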